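/- Let d be a positive integer and let w, x ∈ ℂ^d. Let F be the d×d discrete Fourier transform matrix with entries F_{j,k} = e^{−2πi(j−1)(k−1)/d}, write û := Fu, let ũ denote the reflection ũ(n) := u(((1−n) mod d)+1), and define the mask m := (1/d)·conj(reflection of ŵ) ∈ ℂ^d, i.e., m(n) = (1/d)·conj(ŵ(((1−n) mod d)+1)). Then for every ℓ ∈ ℤ, |⟨S_ℓ m, x̂⟩| = |(F(Diag(w)x))(((−ℓ) mod d)+1)|, where Diag(w)x denotes the entrywise (Hadamard) product w ∘ x. -/

import Mathlib

open scoped BigOperators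

noncomputable section

/-- Map an integer to `Fin d` by reduction mod `d` (requires `0 < d`). -/
def intToFin (d : ℕ) (hd : 0 < d) (z : ℤ) : Fin d :=
  ⟨(z % (d : ℤ)).toNat, by
    have h1 : 0 ≤ z % (d : ℤ) := Int.emod_nonneg z (by exact_mod_cast hd.ne')
    have h2 : z % (d : ℤ) < (d : ℤ) := Int.emod_lt_of_pos z (by exact_mod_cast hd)
    omega⟩

/-- Circular shift: `(S_ℓ x)(n) = x(((n + ℓ - 1) mod d) + 1)` in 1-based indexing. -/
def shift {d : ℕ} (ℓ : ℤ) (x : Fin d → ℂ) : Fin d → ℂ :=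
  fun i => x (intToFin d i.pos ((i : ℤ) + ℓ))

/-- `⟨u,v⟩ = ∑ u(n) conj(v(n))`. -/
def innerC {d : ℕ} (u v : Fin d → ℂ) : ℂ := ∑ n, u n * (starRingEnd ℂ) (v n)

/-- `x ∼ x'` iff `x = e^{iθ} x'` for some real `θ`. -/
def phaseEquiv {d : ℕ} (x x' : Fin d → ℂ) : Prop :=
  ∃ θ : ℝ, x = fun n => Complex.exp (θ * Complex.I) * x' n

/-- Euclidean norm on `ℂ^d`. -/
def norm2 {d : ℕ} (x : Fin d → ℂ) : ℝ := Real.sqrt (∑ n, ‖x n‖ ^ 2)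

/-- `D₂(x,x') = min_θ ‖x - e^{iθ} x'‖₂`. -/
def D2 {d : ℕ} (x x' : Fin d → ℂ) : ℝ :=
  ⨅ θ : ℝ, norm2 (fun n => x n - Complex.exp (θ * Complex.I) * x' n)

/-- `C_{p,q} = {x : p ≤ |x(n)| ≤ q for all n}`. -/
def Cpq (d : ℕ) (p q : ℝ) : Set (Fin d → ℂ) :=
  {x | ∀ n, p ≤ ‖x n‖ ∧ ‖x n‖ ≤ q}

/-- `‖m‖_∞ = max_k ‖m_k‖_∞`. -/
def maskSup {d K : ℕ} (m : Fin K → Fin d → ℂ) : ℝ :=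
  ⨆ k, ⨆ n, ‖m k n‖

/-- The measurement map `Z(x)_{k,ℓ} = |⟨S_{ℓa} m_k, x⟩|`, `1 ≤ k ≤ K`, `1 ≤ ℓ ≤ L`. -/
def Zmap {d K : ℕ} (L : ℕ) (m : Fin K → Fin d → ℂ) (a : ℕ) (x : Fin d → ℂ) :
    EuclideanSpace ℝ (Fin K × Fin L) :=
  WithLp.toLp 2 (fun kl => ‖innerC (shift ((((kl.2 : ℕ) + 1) * a : ℕ) : ℤ) (m kl.1)) x‖)

/-- The measurement map `Y(x)_{k,ℓ} = |⟨S_{ℓa} m_k, x⟩|²`. -/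
def Ymap {d K : ℕ} (L : ℕ) (m : Fin K → Fin d → ℂ) (a : ℕ) (x : Fin d → ℂ) :
    EuclideanSpace ℝ (Fin K × Fin L) :=
  WithLp.toLp 2 (fun kl => ‖innerC (shift ((((kl.2 : ℕ) + 1) * a : ℕ) : ℤ) (m kl.1)) x‖ ^ 2)

/-- The vectors `x^{±}` (sign `ε = ±1`): `q` on positions `1,…,d/2-δ`, `p` on
`d/2-δ+1,…,d/2`, `±q` on `d/2+1,…,d-δ`, and `p` on `d-δ+1,…,d`. -/
def xpm (d δ : ℕ) (p q ε : ℝ) : Fin d → ℂ :=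
  fun i => if (i : ℕ) < d / 2 - δ then (q : ℂ)
    else if (i : ℕ) < d / 2 then (p : ℂ)
    else if (i : ℕ) < d - δ then ((ε * q : ℝ) : ℂ)
    else (p : ℂ)

/-- The difference of outer products `x x^* - x' x'^*`. -/
def outerDiff {d : ℕ} (x x' : Fin d → ℂ) : Matrix (Fin d) (Fin d) ℂ :=
  Matrix.of fun i j => x i * star (x j) - x' i * star (x' j)

lemma outerDiff_isHermitian {d : ℕ} (x x' : Fin d → ℂ) :
    (outerDiff x x').IsHermitian := by
  unfold Matrix.IsHermitian
  ext i j
  simp [outerDiff, Matrix.conjTranspose_apply, star_sub, star_mul, star_star, mul_comm]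

/-- `d₁(x,x') = ‖x x^* - x' x'^*‖₁`, the sum of the singular values (for a Hermitian
matrix, the sum of the absolute values of its eigenvalues). -/
def d1 {d : ℕ} (x x' : Fin d → ℂ) : ℝ :=
  ∑ i, |(outerDiff_isHermitian x x').eigenvalues i|

/-- The discrete Fourier transform: `û(j) = ∑_k e^{-2πi(j-1)(k-1)/d} u(k)`. -/
def dft {d : ℕ} (u : Fin d → ℂ) : Fin d → ℂ :=
  fun j => ∑ k : Fin d, Complex.exp (-(2 * (Real.pi : ℂ) * Complex.I * ((j : ℕ) : ℂ) * ((k : ℕ) : ℂ))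
    / (d : ℂ)) * u k

/-! Identify `Fin d` with `ZMod d`. The shifted mask is then `n ↦ d⁻¹ · conj (ŵ (-ℓ - n))`, so
`⟨S_ℓ m, x̂⟩ = d⁻¹ · conj (∑ₙ ŵ (-ℓ - n) x̂ n)`, and by the convolution theorem for the DFT
(a consequence of Fourier inversion `𝓕 (𝓕 Ψ) = d · Ψ (-·)`) this sum is `d · 𝓕 (w * x) (-ℓ)`. -/

open Finset
open scoped ZMod

open Fin.CommRing in
lemma ZMod.finEquiv_apply (d : ℕ) [NeZero d] (i : Fin d) : ZMod.finEquiv d i = (i : ℕ) := by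
  rw [← map_natCast (ZMod.finEquiv d), Fin.cast_val_eq_self]

lemma intToFin_eq_finEquiv_symm (d : ℕ) [NeZero d] (hd : 0 < d) (z : ℤ) :
    intToFin d hd z = (ZMod.finEquiv d).symm z := by
  rw [RingEquiv.eq_symm_apply, ZMod.finEquiv_apply, intToFin, ← Int.cast_natCast,
    Int.toNat_of_nonneg (Int.emod_nonneg z (by exact_mod_cast hd.ne')), ZMod.intCast_mod]

lemma intToFin_neg_finEquiv_symm (d : ℕ) [NeZero d] (hd : 0 < d) (t : ZMod d) :
    intToFin d hd (-(((ZMod.finEquiv d).symm t : ℕ) : ℤ)) = (ZMod.finEquiv d).symm (-t) := by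
  rw [intToFin_eq_finEquiv_symm, Int.cast_neg, Int.cast_natCast, ← ZMod.finEquiv_apply,
    RingEquiv.apply_symm_apply]

lemma shift_apply (d : ℕ) [NeZero d] (ℓ : ℤ) (u : Fin d → ℂ) (i : Fin d) :
    shift ℓ u i = u ((ZMod.finEquiv d).symm (ZMod.finEquiv d i + ℓ)) := by
  rw [shift, intToFin_eq_finEquiv_symm, ZMod.finEquiv_apply]
  push_cast
  rfl

lemma dft_eq_zmod_dft (d : ℕ) [NeZero d] (u : Fin d → ℂ) (i : Fin d) :
    dft u i = 𝓕 (u ∘ (ZMod.finEquiv d).symm) (ZMod.finEquiv d i) := by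
  rw [ZMod.dft_apply, ← (ZMod.finEquiv d).toEquiv.sum_comp]
  refine sum_congr rfl fun k _ => ?_
  have h := ZMod.stdAddChar_coe (N := d) (-((k : ℕ) * (i : ℕ) : ℤ))
  push_cast at h
  simp only [RingEquiv.toEquiv_eq_coe, EquivLike.coe_coe, Function.comp_apply, smul_eq_mul,
    RingEquiv.symm_apply_apply]
  rw [ZMod.finEquiv_apply, ZMod.finEquiv_apply, h]
  congr 2
  ring

theorem ZMod.sum_dft_sub_mul_dft {N : ℕ} [NeZero N] (Φ Ψ : ZMod N → ℂ) (c : ZMod N) :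
    ∑ n, 𝓕 Φ (c - n) * 𝓕 Ψ n = N * 𝓕 (Φ * Ψ) c := by
  have dft_dft_neg : ∀ j, ∑ n, stdAddChar (j * n) * 𝓕 Ψ n = N * Ψ j := fun j => by
    simpa [dft_apply, mul_comm] using congr_fun (dft_dft Ψ) (-j)
  calc ∑ n, 𝓕 Φ (c - n) * 𝓕 Ψ n
      = ∑ n, ∑ j, stdAddChar (-(j * c)) * Φ j * (stdAddChar (j * n) * 𝓕 Ψ n) := by
        refine sum_congr rfl fun n _ => ?_
        rw [dft_apply, sum_mul]
        refine sum_congr rfl fun j _ => ?_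
        rw [smul_eq_mul, mul_sub, neg_sub, sub_eq_neg_add, AddChar.map_add_eq_mul]
        ring
    _ = ∑ j, stdAddChar (-(j * c)) * Φ j * ∑ n, stdAddChar (j * n) * 𝓕 Ψ n := by
        rw [sum_comm]
        simp_rw [mul_sum]
    _ = N * 𝓕 (Φ * Ψ) c := by
        simp_rw [dft_dft_neg, dft_apply, mul_sum, smul_eq_mul, Pi.mul_apply]
        exact sum_congr rfl fun j _ => by ring

/-- With the mask `m(n) = (1/d) conj(ŵ(((1-n) mod d)+1))`, for every
`ℓ ∈ ℤ`, `|⟨S_ℓ m, x̂⟩| = |(F(Diag(w)x))(((-ℓ) mod d)+1)|`. -/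
theorem masked_fourier (d : ℕ) (hd : 0 < d) (w x : Fin d → ℂ) :
    ∀ ℓ : ℤ,
      ‖innerC
          (shift ℓ (fun i => (1 / (d : ℂ)) * (starRingEnd ℂ) (dft w (intToFin d hd (-(i : ℤ))))))
          (dft x)‖
        = ‖dft (fun n => w n * x n) (intToFin d hd (-ℓ))‖ := by
  intro ℓ
  have : NeZero d := ⟨hd.ne'⟩
  have hinner : innerC
      (shift ℓ (fun i => (1 / (d : ℂ)) * (starRingEnd ℂ) (dft w (intToFin d hd (-(i : ℤ))))))
      (dft x) = (1 / (d : ℂ)) * (starRingEnd ℂ)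
        (∑ t, 𝓕 (w ∘ (ZMod.finEquiv d).symm) (-ℓ - t) * 𝓕 (x ∘ (ZMod.finEquiv d).symm) t) := by
    rw [innerC, ← (ZMod.finEquiv d).symm.toEquiv.sum_comp, map_sum, mul_sum]
    refine sum_congr rfl fun t _ => ?_
    simp only [RingEquiv.toEquiv_eq_coe, EquivLike.coe_coe, shift_apply,
      RingEquiv.apply_symm_apply, intToFin_neg_finEquiv_symm, dft_eq_zmod_dft, map_mul]
    rw [neg_add_rev, ← sub_eq_add_neg, mul_assoc]
  rw [hinner, ZMod.sum_dft_sub_mul_dft, dft_eq_zmod_dft, intToFin_eq_finEquiv_symm,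
    RingEquiv.apply_symm_apply, map_mul, map_natCast, one_div,
    inv_mul_cancel_left₀ (by exact_mod_cast hd.ne'), Complex.norm_conj, Int.cast_neg]
  rfl
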